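/- arXiv:1303.5239 — 2 statements merged into one kernel-verified Lean document; each statement's English description precedes it below -/
import Mathlib

section
/- Any $\lambda$-semidirect product of a finite inverse semigroup $G$ acting by endomorphisms on a locally finite inverse semigroup $A$ is locally finite. -/
/-- A semigroup is inverse if every element has a unique inverse. -/
def IsInverseSemigroup (S : Type*) [Semigroup S] : Prop :=
  ∀ x : S, ∃! y : S, x * y * x = x ∧ y * x * y = y

/-- Multiplication of the λ-semidirect product of `G` acting on `A`. -/
def lamMul {A G : Type*} [Mul A] [Mul G] (act : G → A → A) (invG : G → G)
    (p q : A × G) : A × G :=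
  (act ((p.2 * q.2) * invG (p.2 * q.2)) p.1 * act p.2 q.1, p.2 * q.2)

/-- Underlying set of the λ-semidirect product of `G` acting on `A`. -/
def lamSet {A G : Type*} [Mul G] (act : G → A → A) (invG : G → G) : Set (A × G) :=
  {p | act (p.2 * invG p.2) p.1 = p.1}

/-!
First coordinates of products of generators `(a, g)` of the λ-semidirect product are products of
translates `h · a` of first coordinates of generators. As `G` is finite there are finitely many
such translates; they generate a finite subsemigroup `C` of `A` that is invariant under the action,
so `lamSet ∩ (C × G)` is a finite subsemigroup of the λ-semidirect product containing the
generators.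
-/

open Set

theorem MulHom.mapsTo_closure {M N : Type*} [Mul M] [Mul N] (f : M →ₙ* N) {s : Set M}
    {t : Set N} (hf : MapsTo f s t) :
    MapsTo f (Subsemigroup.closure s) (Subsemigroup.closure t) := fun _ hx =>
  Subsemigroup.closure_mono hf.image_subset <|
    map_mclosure f s ▸ Subsemigroup.mem_map_of_mem f hx

theorem isIdempotentElem_mul_of_mul_mul_eq_self {S : Type*} [Semigroup S] {g g' : S}
    (h : g * g' * g = g) : IsIdempotentElem (g * g') := by
  rw [IsIdempotentElem, ← mul_assoc, h]

section LambdaSemidirect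

variable {A G : Type*} [Mul A] [Semigroup G] {act : G → A → A} {invG : G → G}

theorem lamMul_mem_lamSet (hinvG : ∀ g : G, g * invG g * g = g)
    (hact_mul : ∀ (g : G) (a b : A), act g (a * b) = act g a * act g b)
    (hact_comp : ∀ (g h : G) (a : A), act (g * h) a = act g (act h a))
    (p : A × G) {q : A × G} (hq : q ∈ lamSet act invG) :
    lamMul act invG p q ∈ lamSet act invG := by
  obtain ⟨a, g⟩ := p
  obtain ⟨b, h⟩ := q
  change act (h * invG h) b = b at hq
  set e := g * h * invG (g * h)
  have he : IsIdempotentElem e := isIdempotentElem_mul_of_mul_mul_eq_self (hinvG _)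
  -- `e` is a left identity for `g * h`, hence `e * g` fixes `b = (h * invG h) · b`.
  have heg : e * g * (h * invG h) = g * (h * invG h) := by
    rw [← mul_assoc, mul_assoc e, hinvG, mul_assoc]
  change act e (act e a * act g b) = act e a * act g b
  rw [hact_mul, ← hact_comp, he.eq, ← hact_comp, ← hq, ← hact_comp, ← hact_comp, heg]

theorem mapsTo_act_closure_image2
    (hact_mul : ∀ (g : G) (a b : A), act g (a * b) = act g a * act g b)
    (hact_comp : ∀ (g h : G) (a : A), act (g * h) a = act g (act h a)) (s : Set A) (g : G) :
    MapsTo (act g) (Subsemigroup.closure (image2 act univ s))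
      (Subsemigroup.closure (image2 act univ s)) :=
  MulHom.mapsTo_closure ⟨act g, hact_mul g⟩ <| by
    rintro _ ⟨h, -, a, ha, rfl⟩
    exact ⟨g * h, mem_univ _, a, ha, hact_comp g h a⟩

end LambdaSemidirect

theorem lamSemidirect_locallyFinite_general {A G : Type*} [Semigroup A] [Semigroup G]
    [Finite G]
    (invG : G → G)
    (hinvG : ∀ g : G, g * invG g * g = g ∧ invG g * g * invG g = invG g)
    (act : G → A → A)
    (hact_mul : ∀ (g : G) (a b : A), act g (a * b) = act g a * act g b)
    (hact_comp : ∀ (g h : G) (a : A), act (g * h) a = act g (act h a))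
    (hAlf : ∀ U : Set A, U.Finite → (Subsemigroup.closure U : Set A).Finite) :
    ∀ Y : Set (A × G), Y.Finite → Y ⊆ lamSet act invG →
      Set.Finite {x : A × G | ∀ T : Set (A × G), Y ⊆ T → T ⊆ lamSet act invG →
        (∀ p ∈ T, ∀ q ∈ T, lamMul act invG p q ∈ T) → x ∈ T} := by
  intro Y hYfin hYsub
  set C : Set A := ↑(Subsemigroup.closure (image2 act univ (Prod.fst '' Y)))
  have hCfin : C.Finite := hAlf _ (finite_univ.image2 act (hYfin.image Prod.fst))
  have hactC := mapsTo_act_closure_image2 hact_mul hact_comp (Prod.fst '' Y)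
  set T := lamSet act invG ∩ Prod.fst ⁻¹' C
  have hYT : Y ⊆ T := fun p hp => ⟨hYsub hp, Subsemigroup.subset_closure
    ⟨_, mem_univ _, p.1, mem_image_of_mem _ hp, hYsub hp⟩⟩
  have hT_mul : ∀ p ∈ T, ∀ q ∈ T, lamMul act invG p q ∈ T := by
    rintro p ⟨-, hpC⟩ q ⟨hq, hqC⟩
    exact ⟨lamMul_mem_lamSet (fun g => (hinvG g).1) hact_mul hact_comp p hq,
      mul_mem (hactC _ hpC) (hactC _ hqC)⟩
  exact (hCfin.prod finite_univ).subset fun x hx =>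
    ⟨(hx T hYT inter_subset_left hT_mul).2, mem_univ _⟩

theorem lamSemidirect_locallyFinite {A G : Type*} [Semigroup A] [Semigroup G]
    [Finite G]
    (hA : IsInverseSemigroup A) (hG : IsInverseSemigroup G)
    (invG : G → G)
    (hinvG : ∀ g : G, g * invG g * g = g ∧ invG g * g * invG g = invG g)
    (act : G → A → A)
    (hact_mul : ∀ (g : G) (a b : A), act g (a * b) = act g a * act g b)
    (hact_comp : ∀ (g h : G) (a : A), act (g * h) a = act g (act h a))
    (hAlf : ∀ U : Set A, U.Finite → (Subsemigroup.closure U : Set A).Finite) :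
    ∀ Y : Set (A × G), Y.Finite → Y ⊆ lamSet act invG →
      Set.Finite {x : A × G | ∀ T : Set (A × G), Y ⊆ T → T ⊆ lamSet act invG →
        (∀ p ∈ T, ∀ q ∈ T, lamMul act invG p q ∈ T) → x ∈ T} :=
  lamSemidirect_locallyFinite_general invG hinvG act hact_mul hact_comp hAlf
end

section
/- A $k$-generated inverse semigroup that admits a surjective idempotent-pure morphism onto a finite inverse semigroup of cardinality $n$ has cardinality at most $n(2^{kn} - 1)$. -/
def MulHom.IsIdempotentPure {I J : Type*} [Mul I] [Mul J] (ρ : I →ₙ* J) : Prop :=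
  ∀ a e : I, IsIdempotentElem e → ρ a = ρ e → IsIdempotentElem a

theorem Subsemigroup.closure_induction_right {M : Type*} [Semigroup M] {s : Set M}
    {p : M → Prop} (mem : ∀ x ∈ s, p x) (mul_right : ∀ x, p x → ∀ y ∈ s, p (x * y))
    {x : M} (hx : x ∈ closure s) : p x := by
  have mul_closure : ∀ y ∈ closure s, ∀ x, p x → p (x * y) := by
    intro y hy
    induction hy using closure_induction with
    | mem y hy => exact fun x hx => mul_right x hx y hy
    | mul y z _ _ hy hz => exact fun x hx => mul_assoc x y z ▸ hz _ (hy x hx)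
  induction hx using closure_induction with
  | mem x hx => exact mem x hx
  | mul x y _ hy hx _ => exact mul_closure y hy x hx

theorem Nat.card_subtype_set_nonempty (α : Type*) [Finite α] :
    Nat.card {s : Set α // s.Nonempty} = 2 ^ Nat.card α - 1 := by
  classical
  have := Fintype.ofFinite α
  simp only [Set.nonempty_iff_ne_empty, Nat.card_eq_fintype_card, Fintype.card_subtype_compl,
    Fintype.card_set, Fintype.card_subtype_eq]

namespace IsInverseSemigroup

variable {I : Type*} [Semigroup I] (hI : IsInverseSemigroup I)

noncomputable def inv (a : I) : I := (hI a).exists.choose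

local postfix:max "⁻¹" => hI.inv

theorem mul_inv_mul (a : I) : a * a⁻¹ * a = a := (hI a).exists.choose_spec.1

theorem inv_mul_inv (a : I) : a⁻¹ * a * a⁻¹ = a⁻¹ := (hI a).exists.choose_spec.2

theorem eq_inv {a b : I} (h₁ : a * b * a = a) (h₂ : b * a * b = b) : b = a⁻¹ :=
  (hI a).unique ⟨h₁, h₂⟩ ⟨hI.mul_inv_mul a, hI.inv_mul_inv a⟩

theorem inv_inv (a : I) : a⁻¹⁻¹ = a :=
  (hI.eq_inv (hI.inv_mul_inv a) (hI.mul_inv_mul a)).symm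

theorem inv_eq_self_of_isIdempotentElem {e : I} (he : IsIdempotentElem e) : e⁻¹ = e :=
  (hI.eq_inv (b := e) (by rw [he.eq, he.eq]) (by rw [he.eq, he.eq])).symm

include hI in
/-- The inverse `x` of `e * f` has `f * x * e` as another inverse, so `x = f * x * e` is
idempotent, and then so is `e * f = x⁻¹`. -/
theorem isIdempotentElem_mul {e f : I} (he : IsIdempotentElem e) (hf : IsIdempotentElem f) :
    IsIdempotentElem (e * f) := by
  have h₁ := hI.mul_inv_mul (e * f)
  have h₂ := hI.inv_mul_inv (e * f)
  have he := he.eq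
  have hf := hf.eq
  have hx : f * (e * f)⁻¹ * e = (e * f)⁻¹ := hI.eq_inv (by grind) (by grind)
  have hxx : IsIdempotentElem (e * f)⁻¹ := by
    unfold IsIdempotentElem
    rw [← hx]
    grind
  rw [IsIdempotentElem, ← hI.inv_inv (e * f), hI.inv_eq_self_of_isIdempotentElem hxx, hxx.eq]

include hI in
theorem mul_comm_of_isIdempotentElem {e f : I} (he : IsIdempotentElem e)
    (hf : IsIdempotentElem f) : e * f = f * e := by
  have hef := hI.isIdempotentElem_mul he hf
  have hfe := (hI.isIdempotentElem_mul hf he).eq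
  have he := he.eq
  have hf := hf.eq
  rw [hI.eq_inv (a := e * f) (b := f * e) (by grind [hef.eq]) (by grind),
    hI.inv_eq_self_of_isIdempotentElem hef]

theorem isIdempotentElem_mul_inv (a : I) : IsIdempotentElem (a * a⁻¹) := by
  have := hI.mul_inv_mul a
  unfold IsIdempotentElem
  grind

theorem isIdempotentElem_inv_mul (a : I) : IsIdempotentElem (a⁻¹ * a) := by
  have := hI.inv_mul_inv a
  unfold IsIdempotentElem
  grind

theorem mul_inv_rev (a b : I) : (a * b)⁻¹ = b⁻¹ * a⁻¹ := by
  have := hI.mul_comm_of_isIdempotentElem (hI.isIdempotentElem_mul_inv b)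
    (hI.isIdempotentElem_inv_mul a)
  have := hI.mul_inv_mul a
  have := hI.mul_inv_mul b
  have := hI.inv_mul_inv a
  have := hI.inv_mul_inv b
  exact (hI.eq_inv (by grind) (by grind)).symm

theorem mul_mul_inv_mul (a b : I) : a * b * b⁻¹ * b = a * b := by
  rw [mul_assoc a, mul_assoc a, hI.mul_inv_mul]

theorem mul_mul_inv_eq_conj (a b : I) : a * b * (a * b)⁻¹ = a * (b * b⁻¹) * a⁻¹ := by
  rw [hI.mul_inv_rev]
  simp only [mul_assoc]

theorem mul_mul_inv_of_isIdempotentElem {e : I} (he : IsIdempotentElem e) (a : I) :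
    e * a * (e * a)⁻¹ = e * (a * a⁻¹) := by
  have := hI.mul_comm_of_isIdempotentElem he (hI.isIdempotentElem_mul_inv a)
  rw [hI.mul_inv_rev, hI.inv_eq_self_of_isIdempotentElem he]
  grind [he.eq]

theorem mul_mul_inv_mul_mul_inv (a b : I) :
    a * b * (a * b)⁻¹ * (a * a⁻¹) = a * b * (a * b)⁻¹ := by
  have := hI.inv_mul_inv a
  rw [hI.mul_inv_rev]
  grind

theorem conj_mul_conj {e f : I} (hf : IsIdempotentElem f) (hef : e * f = e) (a : I) :
    a * e * a⁻¹ * (a * f * a⁻¹) = a * e * a⁻¹ := by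
  have := hI.mul_comm_of_isIdempotentElem (hI.isIdempotentElem_inv_mul a) hf
  have := hI.inv_mul_inv a
  grind

section IdempotentPure

variable {J : Type*} [Mul J] {ρ : I →ₙ* J}

theorem eq_of_map_eq_of_mul_inv_eq (hρ : ρ.IsIdempotentPure) {a b : I} (h : ρ a = ρ b)
    (h' : a * a⁻¹ = b * b⁻¹) : a = b := by
  have he : IsIdempotentElem (a⁻¹ * b) :=
    hρ _ _ (hI.isIdempotentElem_inv_mul a) (by rw [map_mul, map_mul, h])
  have he' : b⁻¹ * a = a⁻¹ * b := by
    rw [← hI.inv_eq_self_of_isIdempotentElem he, hI.mul_inv_rev, hI.inv_inv]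
  have := hI.mul_inv_mul a
  have := hI.mul_inv_mul b
  grind [he.eq]

/-- `c * u⁻¹` is idempotent by purity, and `c = (c * u⁻¹) * u`. -/
theorem mul_inv_mul_mul_inv_of_map_eq (hρ : ρ.IsIdempotentPure) {c u : I}
    (hc : c * u⁻¹ * u = c) (h : ρ c = ρ u) : c * c⁻¹ * (u * u⁻¹) = c * c⁻¹ := by
  have hg : IsIdempotentElem (c * u⁻¹) :=
    hρ _ _ (hI.isIdempotentElem_mul_inv u) (by rw [map_mul, map_mul, h])
  have hcc : c * c⁻¹ = c * u⁻¹ * (u * u⁻¹) := by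
    conv_lhs => rw [← hc]
    exact hI.mul_mul_inv_of_isIdempotentElem hg u
  rw [hcc, mul_assoc, (hI.isIdempotentElem_mul_inv u).eq]

/-- `g = q⁻¹ * c * u⁻¹` is idempotent by purity, and `q * q⁻¹ * c = q * (g * u)`. -/
theorem mul_inv_mul_mul_inv_mul_mul_inv_of_map_eq (hρ : ρ.IsIdempotentPure) {c q u : I}
    (hc : c * u⁻¹ * u = c) (h : ρ c = ρ (q * u)) :
    q * q⁻¹ * (c * c⁻¹) * (q * u * (q * u)⁻¹) = q * q⁻¹ * (c * c⁻¹) := by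
  have hu := hI.isIdempotentElem_mul_inv u
  have hg : IsIdempotentElem (q⁻¹ * c * u⁻¹) := by
    refine hρ _ (q⁻¹ * q * (u * u⁻¹))
      (hI.isIdempotentElem_mul (hI.isIdempotentElem_inv_mul q) hu) ?_
    rw [map_mul, map_mul, h, ← map_mul, ← map_mul]
    simp only [mul_assoc]
  have hqc : q * q⁻¹ * c = q * (q⁻¹ * c * u⁻¹ * u) := by
    conv_lhs => rw [← hc]
    simp only [mul_assoc]
  have hqcc : q * q⁻¹ * (c * c⁻¹) = q * (q⁻¹ * c * u⁻¹ * (u * u⁻¹)) * q⁻¹ := by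
    rw [← hI.mul_mul_inv_of_isIdempotentElem (hI.isIdempotentElem_mul_inv q), hqc,
      hI.mul_mul_inv_eq_conj, hI.mul_mul_inv_of_isIdempotentElem hg]
  rw [hqcc, hI.mul_mul_inv_eq_conj]
  exact hI.conj_mul_conj hu (by rw [mul_assoc, hu.eq]) q

variable (ρ) (U : Set I)

def edgeSet (X : I) : Set (U × J) :=
  {p | ∃ c, c * (p.1 : I)⁻¹ * p.1 = c ∧ ρ c = p.2 ∧ X * (c * c⁻¹) = X}

variable {ρ U}

theorem edgeSet_anti {X Y : I} (h : X * Y = X) : hI.edgeSet ρ U Y ⊆ hI.edgeSet ρ U X := by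
  rintro p ⟨c, hc, hρc, hYc⟩
  exact ⟨c, hc, hρc, by rw [← h, mul_assoc, hYc]⟩

theorem mk_mem_edgeSet {c u : I} (hu : u ∈ U) (hc : c * u⁻¹ * u = c) :
    (⟨u, hu⟩, ρ c) ∈ hI.edgeSet ρ U (c * c⁻¹) :=
  ⟨c, hc, rfl, (hI.isIdempotentElem_mul_inv c).eq⟩

theorem edgeSet_nonempty {b : I} (hb : b ∈ Subsemigroup.closure U) :
    (hI.edgeSet ρ U (b * b⁻¹)).Nonempty :=
  Subsemigroup.closure_induction_right (p := fun b => (hI.edgeSet ρ U (b * b⁻¹)).Nonempty)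
    (fun u hu => ⟨_, hI.mk_mem_edgeSet hu (hI.mul_inv_mul u)⟩)
    (fun y _ u hu => ⟨_, hI.mk_mem_edgeSet hu (hI.mul_mul_inv_mul y u)⟩) hb

theorem mul_mul_inv_eq_of_edgeSet_subset (hρ : ρ.IsIdempotentPure) {b : I}
    (hb : b ∈ Subsemigroup.closure U) {X : I}
    (h : hI.edgeSet ρ U (b * b⁻¹) ⊆ hI.edgeSet ρ U X) : X * (b * b⁻¹) = X := by
  refine Subsemigroup.closure_induction_right
    (p := fun b => ∀ X, hI.edgeSet ρ U (b * b⁻¹) ⊆ hI.edgeSet ρ U X → X * (b * b⁻¹) = X)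
    (fun u hu X h => ?_) (fun y ih u hu X h => ?_) hb X h
  · obtain ⟨c, hc, hρc, hXc⟩ := h (hI.mk_mem_edgeSet hu (hI.mul_inv_mul u))
    rw [← hXc, mul_assoc, hI.mul_inv_mul_mul_inv_of_map_eq hρ hc hρc]
  · have hXy : X * (y * y⁻¹) = X :=
      ih X ((hI.edgeSet_anti (hI.mul_mul_inv_mul_mul_inv y u)).trans h)
    obtain ⟨c, hc, hρc, hXc⟩ := h (hI.mk_mem_edgeSet hu (hI.mul_mul_inv_mul y u))
    calc X * (y * u * (y * u)⁻¹) = X * (y * y⁻¹) * (c * c⁻¹) * (y * u * (y * u)⁻¹) := by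
          rw [hXy, hXc]
      _ = X * (y * y⁻¹ * (c * c⁻¹) * (y * u * (y * u)⁻¹)) := by simp only [mul_assoc]
      _ = X := by
          rw [hI.mul_inv_mul_mul_inv_mul_mul_inv_of_map_eq hρ hc hρc, ← mul_assoc, hXy, hXc]

theorem injective_edgeSet_prod (hρ : ρ.IsIdempotentPure) (hU : Subsemigroup.closure U = ⊤) :
    Function.Injective fun a => (hI.edgeSet ρ U (a * a⁻¹), ρ a) := by
  intro a b hab
  obtain ⟨hE, hρab⟩ := Prod.mk.inj hab
  have hab := hI.mul_mul_inv_eq_of_edgeSet_subset hρ (hU ▸ Subsemigroup.mem_top b) hE.ge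
  have hba := hI.mul_mul_inv_eq_of_edgeSet_subset hρ (hU ▸ Subsemigroup.mem_top a) hE.le
  refine hI.eq_of_map_eq_of_mul_inv_eq hρ hρab ?_
  rw [← hab, hI.mul_comm_of_isIdempotentElem (hI.isIdempotentElem_mul_inv a)
    (hI.isIdempotentElem_mul_inv b), hba]

end IdempotentPure

end IsInverseSemigroup

theorem card_bound_of_idempotentPure_quotient_general {I J : Type*} [Semigroup I] [Semigroup J]
    [Finite J]
    (hI : IsInverseSemigroup I)
    (k n : ℕ) (hn : Nat.card J = n)
    (hgen : ∃ U : Set I, U.Finite ∧ U.ncard ≤ k ∧ Subsemigroup.closure U = ⊤)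
    (ρ : I →ₙ* J)
    (hpure : ∀ a e : I, IsIdempotentElem e → ρ a = ρ e → IsIdempotentElem a) :
    Finite I ∧ Nat.card I ≤ n * (2 ^ (k * n) - 1) := by
  obtain ⟨U, hUfin, hUk, hU⟩ := hgen
  have : Finite U := hUfin.to_subtype
  let f : I → {s : Set (U × J) // s.Nonempty} × J := fun a =>
    (⟨hI.edgeSet ρ U (a * hI.inv a), hI.edgeSet_nonempty (hU ▸ Subsemigroup.mem_top a)⟩, ρ a)
  have hf : Function.Injective f := fun a b hab =>
    hI.injective_edgeSet_prod hpure hU (Prod.ext (congrArg (·.1.1) hab) (congrArg (·.2) hab))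
  refine ⟨Finite.of_injective f hf, ?_⟩
  calc Nat.card I ≤ Nat.card ({s : Set (U × J) // s.Nonempty} × J) :=
        Nat.card_le_card_of_injective f hf
    _ = n * (2 ^ (U.ncard * n) - 1) := by
        rw [Nat.card_prod, Nat.card_subtype_set_nonempty, Nat.card_prod, hn,
          Nat.card_coe_set_eq, mul_comm]
    _ ≤ n * (2 ^ (k * n) - 1) := by gcongr; norm_num

theorem card_bound_of_idempotentPure_quotient {I J : Type*} [Semigroup I] [Semigroup J]
    [Finite J]
    (hI : IsInverseSemigroup I) (hJ : IsInverseSemigroup J)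
    (k n : ℕ) (hn : Nat.card J = n)
    (hgen : ∃ U : Set I, U.Finite ∧ U.ncard ≤ k ∧ Subsemigroup.closure U = ⊤)
    (ρ : I →ₙ* J) (hsurj : Function.Surjective ρ)
    (hpure : ∀ a e : I, IsIdempotentElem e → ρ a = ρ e → IsIdempotentElem a) :
    Finite I ∧ Nat.card I ≤ n * (2 ^ (k * n) - 1) :=
  card_bound_of_idempotentPure_quotient_general hI k n hn hgen ρ hpure
end
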